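/- arXiv:1712.04067 — 6 statements merged into one kernel-verified Lean document; each statement's English description precedes it below -/
import Mathlib

section
/- Let A be a unital C*-algebra and let u = (u_{ij})_{i,j=1,2,3} be a 3×3 magic matrix over A. Then the entries of u pairwise commute: u_{ij} u_{kl} = u_{kl} u_{ij} for all i, j, k, l. -/
/-!
Each row and each column of a magic matrix is a family of projections summing to `1`, so each
entry lies below `1 - p` for any other entry `p` of its row or column, i.e. the entries are
mutually orthogonal. Entries in a common row or column therefore commute, both
products being `0`. For `p = u i j` and `q = u k l` with `i ≠ k`, `j ≠ l`, let `r = u m n` be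
the entry completing the transversal. Expanding `q` through its column and then `u m l` through
its row gives `p * q = p * r`, and cyclically `q * r = q * p`, `r * p = r * q`; taking adjoints
links these into `p * q = q * p`.
-/

open Finset

lemma Fin.sum_univ_three_of_pairwise_ne {M : Type*} [AddCommMonoid M] (f : Fin 3 → M)
    {i j k : Fin 3} (hij : i ≠ j) (hik : i ≠ k) (hjk : j ≠ k) :
    ∑ x, f x = f i + f j + f k := by
  have huniv : (univ : Finset (Fin 3)) = {i, j, k} := by
    revert i j k; decide
  rw [huniv, sum_insert (by simp [hij, hik]), sum_pair hjk, add_assoc]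

lemma IsStarProjection.mul_eq_zero_of_sum_eq_one {A : Type*} [CStarAlgebra A] [PartialOrder A]
    [StarOrderedRing A] {ι : Type*} [Fintype ι] {p : ι → A} (hp : ∀ i, IsStarProjection (p i))
    (hsum : ∑ i, p i = 1) {i j : ι} (hij : i ≠ j) : p i * p j = 0 := by
  classical
  have hle : p j ≤ 1 - p i := by
    rw [← hsum, ← add_sum_erase _ _ (mem_univ i), add_sub_cancel_left]
    exact single_le_sum (fun k _ => (hp k).nonneg) (mem_erase.mpr ⟨hij.symm, mem_univ j⟩)
  have h := ((hp j).le_iff_mul_eq_right (hp i).one_sub).mp hle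
  rwa [sub_mul, one_mul, sub_eq_self] at h

theorem commute_of_mul_eq_mul_cyclic {R : Type*} [Mul R] [StarMul R] {p q r : R}
    (hp : IsSelfAdjoint p) (hq : IsSelfAdjoint q) (hr : IsSelfAdjoint r)
    (hpq : p * q = p * r) (hqr : q * r = q * p) (hrp : r * p = r * q) : Commute p q :=
  calc p * q = star (q * p) := by rw [star_mul, hp.star_eq, hq.star_eq]
    _ = star (q * r) := by rw [hqr]
    _ = r * q := by rw [star_mul, hq.star_eq, hr.star_eq]
    _ = r * p := hrp.symm
    _ = star (p * r) := by rw [star_mul, hp.star_eq, hr.star_eq]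
    _ = star (p * q) := by rw [hpq]
    _ = q * p := by rw [star_mul, hp.star_eq, hq.star_eq]

section OrthogonalRowsCols

variable {R : Type*} [Ring R] {u : Fin 3 → Fin 3 → R}

lemma mul_eq_mul_of_transversal (hrow : ∀ i, ∑ j, u i j = 1) (hcol : ∀ j, ∑ i, u i j = 1)
    (hrow_orth : ∀ i j l, j ≠ l → u i j * u i l = 0)
    (hcol_orth : ∀ i k j, i ≠ k → u i j * u k j = 0)
    {i k m j l n : Fin 3} (hik : i ≠ k) (him : i ≠ m) (hkm : k ≠ m)
    (hjl : j ≠ l) (hjn : j ≠ n) (hln : l ≠ n) :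
    u i j * u k l = u i j * u m n := by
  have hkl : u k l = 1 - u i l - u m l := by
    rw [← hcol l, Fin.sum_univ_three_of_pairwise_ne _ hik him hkm]; abel
  have hml : u m l = 1 - u m j - u m n := by
    rw [← hrow m, Fin.sum_univ_three_of_pairwise_ne _ hjl hjn hln]; abel
  rw [hkl, hml]
  simp only [mul_sub, mul_one, hrow_orth i j l hjl, hcol_orth i m j him]
  abel

lemma commute_of_orthogonal_rows_cols [StarMul R] (hsa : ∀ i j, IsSelfAdjoint (u i j))
    (hrow : ∀ i, ∑ j, u i j = 1) (hcol : ∀ j, ∑ i, u i j = 1)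
    (hrow_orth : ∀ i j l, j ≠ l → u i j * u i l = 0)
    (hcol_orth : ∀ i k j, i ≠ k → u i j * u k j = 0) (i j k l : Fin 3) :
    Commute (u i j) (u k l) := by
  rcases eq_or_ne i k with rfl | hik
  · rcases eq_or_ne j l with rfl | hjl
    · exact Commute.refl _
    · exact (hrow_orth i j l hjl).trans (hrow_orth i l j hjl.symm).symm
  rcases eq_or_ne j l with rfl | hjl
  · exact (hcol_orth i k j hik).trans (hcol_orth k i j hik.symm).symm
  obtain ⟨m, hmi, hmk⟩ := ENat.exists_ne_ne_of_three_le (by simp) i k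
  obtain ⟨n, hnj, hnl⟩ := ENat.exists_ne_ne_of_three_le (by simp) j l
  exact commute_of_mul_eq_mul_cyclic (hsa i j) (hsa k l) (hsa m n)
    (mul_eq_mul_of_transversal hrow hcol hrow_orth hcol_orth
      hik hmi.symm hmk.symm hjl hnj.symm hnl.symm)
    (mul_eq_mul_of_transversal hrow hcol hrow_orth hcol_orth
      hmk.symm hik.symm hmi hnl.symm hjl.symm hnj)
    (mul_eq_mul_of_transversal hrow hcol hrow_orth hcol_orth
      hmi hmk hik hnj hnl hjl)

end OrthogonalRowsCols

/-- the entries of a `3×3` magic matrix over a unital C*-algebra pairwise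
commute. -/
theorem magic_three_by_three_commutes {A : Type*} [NormedRing A] [StarRing A] [CStarRing A]
    [NormedAlgebra ℂ A] [StarModule ℂ A] [CompleteSpace A]
    (u : Fin 3 → Fin 3 → A)
    (hproj : ∀ i j, IsSelfAdjoint (u i j) ∧ IsIdempotentElem (u i j))
    (hrow : ∀ i, ∑ j, u i j = 1) (hcol : ∀ j, ∑ i, u i j = 1) :
    ∀ i j k l, Commute (u i j) (u k l) := by
  let : CStarAlgebra A := {}
  -- the positivity order of a C⋆-algebra is not a global instance
  let := CStarAlgebra.spectralOrder A
  have := CStarAlgebra.spectralOrderedRing A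
  have hp (i j : Fin 3) : IsStarProjection (u i j) := ⟨(hproj i j).2, (hproj i j).1⟩
  exact commute_of_orthogonal_rows_cols (fun i j => (hproj i j).1) hrow hcol
    (fun i _ _ hjl => IsStarProjection.mul_eq_zero_of_sum_eq_one (hp i) (hrow i) hjl)
    (fun _ _ j hik => IsStarProjection.mul_eq_zero_of_sum_eq_one (hp · j) (hcol j) hik)
end

section
/- There exists a 4×4 magic matrix u = (u_{ij}) over the C*-algebra M_2(ℂ) of complex 2×2 matrices whose entries do not all commute: for some indices i, j, k, l one has u_{ij} u_{kl} ≠ u_{kl} u_{ij}. -/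
noncomputable section

private def P : Matrix (Fin 2) (Fin 2) ℂ := !![1, 0; 0, 0]
private def Q : Matrix (Fin 2) (Fin 2) ℂ := !![1/2, 1/2; 1/2, 1/2]

private def U : Fin 4 → Fin 4 → Matrix (Fin 2) (Fin 2) ℂ :=
  ![![P, 1 - P, 0, 0],
    ![1 - P, P, 0, 0],
    ![0, 0, Q, 1 - Q],
    ![0, 0, 1 - Q, Q]]

private lemma hP_sa : IsSelfAdjoint P := by
  ext i j; fin_cases i <;> fin_cases j <;>
    simp [P, IsSelfAdjoint, Matrix.conjTranspose_apply]

private lemma hQ_sa : IsSelfAdjoint Q := by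
  ext i j; fin_cases i <;> fin_cases j <;>
    simp [Q, IsSelfAdjoint, Matrix.conjTranspose_apply]

private lemma hP_idem : IsIdempotentElem P := by
  show P * P = P
  ext i j; fin_cases i <;> fin_cases j <;>
    simp [P, Matrix.mul_apply, Fin.sum_univ_two]

private lemma hQ_idem : IsIdempotentElem Q := by
  show Q * Q = Q
  ext i j; fin_cases i <;> fin_cases j <;>
    (simp [Q, Matrix.mul_apply, Fin.sum_univ_two]; ring)

/-- there exists a `4×4` magic matrix over `M_2(ℂ)` whose entries do not all
commute. -/
theorem exists_noncommutative_magic_four_by_four :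
    ∃ u : Fin 4 → Fin 4 → Matrix (Fin 2) (Fin 2) ℂ,
      (∀ i j, IsSelfAdjoint (u i j) ∧ IsIdempotentElem (u i j)) ∧
      (∀ i, ∑ j, u i j = 1) ∧ (∀ j, ∑ i, u i j = 1) ∧
      ∃ i j k l, u i j * u k l ≠ u k l * u i j := by
  refine ⟨U, ?_, ?_, ?_, 0, 0, 2, 2, ?_⟩
  · intro i j
    have h0 : IsSelfAdjoint (0 : Matrix (Fin 2) (Fin 2) ℂ) := by
      simp [IsSelfAdjoint]
    have h0i : IsIdempotentElem (0 : Matrix (Fin 2) (Fin 2) ℂ) := IsIdempotentElem.zero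
    have h1 : IsSelfAdjoint (1 : Matrix (Fin 2) (Fin 2) ℂ) := by
      simp [IsSelfAdjoint]
    have hP' : IsSelfAdjoint (1 - P) := h1.sub hP_sa
    have hQ' : IsSelfAdjoint (1 - Q) := h1.sub hQ_sa
    have hPi' : IsIdempotentElem (1 - P) := hP_idem.one_sub
    have hQi' : IsIdempotentElem (1 - Q) := hQ_idem.one_sub
    fin_cases i <;> fin_cases j <;>
      first
        | exact ⟨hP_sa, hP_idem⟩
        | exact ⟨hQ_sa, hQ_idem⟩
        | exact ⟨hP', hPi'⟩
        | exact ⟨hQ', hQi'⟩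
        | exact ⟨h0, h0i⟩
  · intro i
    fin_cases i <;> simp [U, Fin.sum_univ_four]
  · intro j
    fin_cases j <;>
      simp [U, Fin.sum_univ_four, Matrix.cons_val_two, Matrix.cons_val_three,
        Matrix.tail_cons, Matrix.vecHead, Matrix.vecTail]
  · show P * Q ≠ Q * P
    intro h
    have := congrFun (congrFun h 0) 1
    simp [P, Q, Matrix.mul_apply, Fin.sum_univ_two] at this

end
end

section
/- There exist a complex Hilbert space H and a 4×4 magic matrix u = (u_{ij}) over the C*-algebra B(H) of bounded operators on H such that the unital subalgebra of B(H) generated by the sixteen entries u_{ij} is infinite-dimensional as a complex vector space. -/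
/-!
Take two projections `p`, `q` on `H`; the block-diagonal matrix with blocks
`[[p, 1 - p], [1 - p, p]]` and `[[q, 1 - q], [1 - q, q]]` is magic, and its entries generate
the algebra generated by `p` and `q`. On `H = ⨁ₙ ℂ²` let `p` project fibrewise onto the line
`ℂ (1, 0)` and `q` onto `ℂ (1, n)`. Then `p q p` has eigenvalue `1 / (1 + n²)` on the `n`-th
fibre, so it has infinite spectrum, whereas every element of a finite-dimensional algebra is
algebraic and therefore has finite spectrum.
-/

structure IsMagic {R n : Type*} [NonAssocSemiring R] [Star R] [Fintype n] (u : n → n → R) :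
    Prop where
  isStarProjection : ∀ i j, IsStarProjection (u i j)
  sum_row : ∀ i, ∑ j, u i j = 1
  sum_col : ∀ j, ∑ i, u i j = 1

def magicOfProjections {R : Type*} [Ring R] (p q : R) : Fin 4 → Fin 4 → R :=
  !![p, 1 - p, 0, 0; 1 - p, p, 0, 0; 0, 0, q, 1 - q; 0, 0, 1 - q, q]

theorem isMagic_magicOfProjections {R : Type*} [Ring R] [StarRing R] {p q : R}
    (hp : IsStarProjection p) (hq : IsStarProjection q) : IsMagic (magicOfProjections p q) where
  isStarProjection i j := by
    fin_cases i <;> fin_cases j <;>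
      simp [magicOfProjections, hp, hq, hp.one_sub, hq.one_sub, IsStarProjection.zero]
  sum_row i := by fin_cases i <;> simp [magicOfProjections, Fin.sum_univ_four]
  sum_col j := by fin_cases j <;> simp [magicOfProjections, Fin.sum_univ_four]

open Polynomial in
theorem IsAlgebraic.finite_spectrum {K A : Type*} [Field K] [Ring A] [Algebra K A]
    {x : A} (hx : IsAlgebraic K x) : (spectrum K x).Finite := by
  cases subsingleton_or_nontrivial A
  · simp [spectrum.of_subsingleton]
  obtain ⟨p, hp, hpx⟩ := hx
  refine (p.rootSet_finite K).subset fun μ hμ => ?_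
  have hμp := spectrum.subset_polynomial_aeval x p ⟨μ, hμ, rfl⟩
  rw [hpx, spectrum.zero_eq, Set.mem_singleton_iff] at hμp
  simpa [mem_rootSet, hp] using hμp

theorem Subalgebra.finite_spectrum_of_mem {K A : Type*} [Field K] [Ring A] [Algebra K A]
    (S : Subalgebra K A) [FiniteDimensional K S] {x : A} (hx : x ∈ S) :
    (spectrum K x).Finite :=
  (isAlgebraic_iff_isAlgebraic_val.mp
    (Algebra.IsAlgebraic.isAlgebraic (⟨x, hx⟩ : S))).finite_spectrum

theorem ContinuousLinearMap.mem_spectrum_of_apply_eq_smul {𝕜 E : Type*} [NormedField 𝕜]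
    [NormedAddCommGroup E] [NormedSpace 𝕜 E] {x : E →L[𝕜] E} {μ : 𝕜} {v : E}
    (hv : v ≠ 0) (hxv : x v = μ • v) : μ ∈ spectrum 𝕜 x := by
  rintro ⟨u, hu⟩
  apply hv
  calc v = (u⁻¹ * u : E →L[𝕜] E) v := by simp
    _ = 0 := by simp [hu, hxv]

open Submodule in
theorem starProjection_singleton_starProjection_singleton {𝕜 E : Type*} [RCLike 𝕜]
    [NormedAddCommGroup E] [InnerProductSpace 𝕜 E] {u : E} (hu : ‖u‖ = 1) (v : E) :
    (𝕜 ∙ u).starProjection ((𝕜 ∙ v).starProjection u) =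
      ((‖inner 𝕜 u v‖ ^ 2 / ‖v‖ ^ 2 : ℝ) : 𝕜) • u := by
  rw [starProjection_singleton 𝕜 (v := v) u, map_smul, starProjection_unit_singleton 𝕜 hu,
    smul_smul, ← inner_conj_symm, div_mul_eq_mul_div, RCLike.conj_mul]
  push_cast
  rfl

theorem ContinuousLinearMap.norm_apply_le_of_opNorm_le_one {𝕜 E : Type*}
    [NontriviallyNormedField 𝕜] [SeminormedAddCommGroup E] [NormedSpace 𝕜 E] {f : E →L[𝕜] E}
    (hf : ‖f‖ ≤ 1) (x : E) : ‖f x‖ ≤ ‖x‖ :=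
  f.le_of_opNorm_le hf x |>.trans_eq (one_mul _)

namespace lp

open scoped ENNReal

section Diagonal

variable {ι 𝕜 : Type*} {E : ι → Type*} [NontriviallyNormedField 𝕜]
  [∀ i, NormedAddCommGroup (E i)] [∀ i, NormedSpace 𝕜 (E i)] {p : ℝ≥0∞} [Fact (1 ≤ p)]
  {A : ∀ i, E i →L[𝕜] E i}

variable (p A) in
noncomputable def diagonal (hA : ∀ i, ‖A i‖ ≤ 1) : lp E p →L[𝕜] lp E p :=
  LinearMap.mkContinuous
    { toFun f := ⟨fun i => A i (f i),
        (lp.memℓp f).mono' fun i => (A i).norm_apply_le_of_opNorm_le_one (hA i) (f i)⟩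
      map_add' f g := by ext i; exact map_add (A i) (f i) (g i)
      map_smul' c f := by ext i; exact map_smul (A i) c (f i) }
    1 fun f => by
      rw [one_mul]
      exact lp.norm_mono (zero_lt_one.trans_le Fact.out).ne'
        fun i => (A i).norm_apply_le_of_opNorm_le_one (hA i) (f i)

variable (hA : ∀ i, ‖A i‖ ≤ 1)

@[simp]
theorem diagonal_apply (f : lp E p) (i : ι) : diagonal p A hA f i = A i (f i) := rfl

theorem diagonal_single [DecidableEq ι] (i : ι) (x : E i) :
    diagonal p A hA (lp.single p i x) = lp.single p i (A i x) := by
  ext j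
  obtain rfl | hj := eq_or_ne j i
  · simp
  · simp [Pi.single_eq_of_ne hj]

theorem isIdempotentElem_diagonal (h : ∀ i, IsIdempotentElem (A i)) :
    IsIdempotentElem (diagonal p A hA) := by
  ext f i
  exact congr($(h i) (f i))

end Diagonal

theorem isStarProjection_diagonal {ι 𝕜 : Type*} {E : ι → Type*} [RCLike 𝕜]
    [∀ i, NormedAddCommGroup (E i)] [∀ i, InnerProductSpace 𝕜 (E i)] [∀ i, CompleteSpace (E i)]
    {A : ∀ i, E i →L[𝕜] E i} (hA : ∀ i, ‖A i‖ ≤ 1) (h : ∀ i, IsStarProjection (A i)) :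
    IsStarProjection (diagonal 2 A hA) where
  isIdempotentElem := isIdempotentElem_diagonal hA fun i => (h i).isIdempotentElem
  isSelfAdjoint := by
    rw [ContinuousLinearMap.isSelfAdjoint_iff_isSymmetric]
    intro f g
    simp only [ContinuousLinearMap.coe_coe, lp.inner_eq_tsum, diagonal_apply]
    exact tsum_congr fun i => (h i).isSelfAdjoint.isSymmetric (f i) (g i)

end lp

section FiberwiseLineProjection

open Submodule

variable {ι 𝕜 E : Type*} [RCLike 𝕜] [NormedAddCommGroup E] [InnerProductSpace 𝕜 E]

variable (𝕜) in
noncomputable def fiberwiseLineProjection (w : ι → E) :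
    lp (fun _ : ι => E) 2 →L[𝕜] lp (fun _ : ι => E) 2 :=
  lp.diagonal 2 (fun i => (𝕜 ∙ w i).starProjection) fun _ => starProjection_norm_le _

theorem isStarProjection_fiberwiseLineProjection [CompleteSpace E] (w : ι → E) :
    IsStarProjection (fiberwiseLineProjection 𝕜 w) :=
  lp.isStarProjection_diagonal _ fun _ => isStarProjection_starProjection

theorem fiberwiseLineProjection_mul_mul_apply_single [DecidableEq ι] {u : ι → E}
    (hu : ∀ i, ‖u i‖ = 1) (v : ι → E) (i : ι) :
    (fiberwiseLineProjection 𝕜 u * fiberwiseLineProjection 𝕜 v * fiberwiseLineProjection 𝕜 u)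
        (lp.single 2 i (u i)) =
      ((‖inner 𝕜 (u i) (v i)‖ ^ 2 / ‖v i‖ ^ 2 : ℝ) : 𝕜) • lp.single 2 i (u i) := by
  simp only [mul_apply_eq_comp, fiberwiseLineProjection, lp.diagonal_single,
    starProjection_eq_self_iff.mpr (mem_span_singleton_self (u i)),
    starProjection_singleton_starProjection_singleton (hu i), lp.single_smul]

end FiberwiseLineProjection

noncomputable def fiberVector (n : ℕ) : EuclideanSpace ℂ (Fin 2) := !₂[1, n]

theorem norm_fiberVector_zero : ‖fiberVector 0‖ = 1 := by
  simp [fiberVector, EuclideanSpace.norm_eq, Fin.sum_univ_two]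

theorem inner_fiberVector_zero (n : ℕ) : inner ℂ (fiberVector 0) (fiberVector n) = 1 := by
  simp [fiberVector, PiLp.inner_apply, Fin.sum_univ_two]

theorem norm_fiberVector_sq (n : ℕ) : ‖fiberVector n‖ ^ 2 = 1 + n ^ 2 := by
  simp [fiberVector, EuclideanSpace.norm_sq_eq, Fin.sum_univ_two]

theorem infinite_spectrum_fiberwiseLineProjection_mul_mul :
    (spectrum ℂ (fiberwiseLineProjection ℂ (fun _ => fiberVector 0) *
      fiberwiseLineProjection ℂ fiberVector *
      fiberwiseLineProjection ℂ (fun _ => fiberVector 0))).Infinite := by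
  refine Set.infinite_of_injective_forall_mem (f := fun n : ℕ => (((1 + n ^ 2 : ℝ)⁻¹ : ℝ) : ℂ))
    (fun m n hmn => ?_) fun n => ?_
  · have hmn' : (m : ℂ) ^ 2 = n ^ 2 := by simpa using hmn
    exact Nat.pow_left_injective two_ne_zero (by exact_mod_cast hmn')
  · refine ContinuousLinearMap.mem_spectrum_of_apply_eq_smul
      (v := lp.single 2 n (fiberVector 0)) ?_ ?_
    · rw [← norm_ne_zero_iff, lp.norm_single two_pos, norm_fiberVector_zero]
      exact one_ne_zero
    · rw [fiberwiseLineProjection_mul_mul_apply_single (fun _ => norm_fiberVector_zero),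
        inner_fiberVector_zero, norm_fiberVector_sq]
      simp

/-- there exist a complex Hilbert space `H` and a `4×4` magic matrix over
`B(H)` whose sixteen entries generate an infinite-dimensional unital subalgebra of `B(H)`. -/
theorem exists_magic_four_by_four_infinite_dimensional :
    ∃ (H : Type) (_ : NormedAddCommGroup H) (_ : InnerProductSpace ℂ H)
      (_ : CompleteSpace H) (u : Fin 4 → Fin 4 → H →L[ℂ] H),
      (∀ i j, IsSelfAdjoint (u i j) ∧ IsIdempotentElem (u i j)) ∧
      (∀ i, ∑ j, u i j = 1) ∧ (∀ j, ∑ i, u i j = 1) ∧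
      ¬ FiniteDimensional ℂ
        (Algebra.adjoin ℂ {x : H →L[ℂ] H | ∃ i j, u i j = x}) := by
  set p := fiberwiseLineProjection ℂ fun _ : ℕ => fiberVector 0
  set q := fiberwiseLineProjection ℂ fiberVector
  have hu : IsMagic (magicOfProjections p q) :=
    isMagic_magicOfProjections (isStarProjection_fiberwiseLineProjection _)
      (isStarProjection_fiberwiseLineProjection _)
  refine ⟨_, _, _, _, magicOfProjections p q,
    fun i j => ⟨(hu.isStarProjection i j).isSelfAdjoint,
      (hu.isStarProjection i j).isIdempotentElem⟩,
    hu.sum_row, hu.sum_col, fun hfin => ?_⟩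
  have hp : p ∈ Algebra.adjoin ℂ {x | ∃ i j, magicOfProjections p q i j = x} :=
    Algebra.subset_adjoin ⟨0, 0, rfl⟩
  have hq : q ∈ Algebra.adjoin ℂ {x | ∃ i j, magicOfProjections p q i j = x} :=
    Algebra.subset_adjoin ⟨2, 2, rfl⟩
  exact infinite_spectrum_fiberwiseLineProjection_mul_mul
    (Subalgebra.finite_spectrum_of_mem _ (mul_mem (mul_mem hp hq) hp))
end

section
/- Let A be a unital C*-algebra, let u = (u_{ij}) be an N×N magic matrix over A, let k ≥ 1, and let j = (j_1,…,j_k) ∈ {1,…,N}^k satisfy j_1 ≠ j_2, j_2 ≠ j_3, …, j_{k−1} ≠ j_k. Then the sum of the ordered products u_{i_1 j_1} u_{i_2 j_2} ⋯ u_{i_k j_k}, taken over all tuples i = (i_1,…,i_k) ∈ {1,…,N}^k with i_1 ≠ i_2, i_2 ≠ i_3, …, i_{k−1} ≠ i_k, equals 1. -/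
/-- A list product `f 0 * f 1 * ⋯` vanishes if some adjacent pair multiplies to zero. -/
lemma prod_ofFn_eq_zero_of_adjacent {A : Type*} [MonoidWithZero A] :
    ∀ (n : ℕ) (f : Fin n → A) (s : ℕ) (hs : s + 1 < n),
      f ⟨s, by omega⟩ * f ⟨s + 1, hs⟩ = 0 → (List.ofFn f).prod = 0 := by
  intro n
  induction n with
  | zero => intro f s hs; omega
  | succ m ih =>
    intro f s hs h
    rw [List.ofFn_succ, List.prod_cons]
    cases s with
    | zero =>
      obtain ⟨m', rfl⟩ : ∃ m', m = m' + 1 := ⟨m - 1, by omega⟩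
      rw [List.ofFn_succ, List.prod_cons, ← mul_assoc]
      have : f 0 * f (Fin.succ 0) = 0 := by
        convert h using 2 <;> simp [Fin.ext_iff]
      rw [this, zero_mul]
    | succ s' =>
      rw [ih (fun i => f i.succ) s' (by omega) ?_, mul_zero]
      show f (Fin.succ ⟨s', _⟩) * f (Fin.succ ⟨s' + 1, _⟩) = 0
      convert h using 2 <;> simp [Fin.ext_iff]

/-- Projections summing to 1 in a C*-algebra are pairwise orthogonal. -/
lemma magic_row_orth {A : Type*} [NormedRing A] [StarRing A]
    [CStarRing A] [NormedAlgebra ℂ A] [StarModule ℂ A] [CompleteSpace A]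
    {N : ℕ} (u : Fin N → Fin N → A)
    (hproj : ∀ i j, IsSelfAdjoint (u i j) ∧ IsIdempotentElem (u i j))
    (hrow : ∀ i, ∑ j, u i j = 1) :
    ∀ i (j j' : Fin N), j ≠ j' → u i j * u i j' = 0 := by
  letI : CStarAlgebra A := {}
  letI := CStarAlgebra.spectralOrder A
  haveI := CStarAlgebra.spectralOrderedRing A
  intro i j j' hne
  have hterm : ∀ j'' : Fin N,
      (u i j * u i j'') * star (u i j * u i j'') = u i j * (u i j'' * u i j) := by
    intro j''
    rw [star_mul, (hproj i j).1.star_eq, (hproj i j'').1.star_eq]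
    calc u i j * u i j'' * (u i j'' * u i j)
        = u i j * ((u i j'' * u i j'') * u i j) := by noncomm_ring
      _ = u i j * (u i j'' * u i j) := by rw [(hproj i j'').2]
  have hsum : ∑ j'' ∈ Finset.univ.erase j,
      (u i j * u i j'') * star (u i j * u i j'') = 0 := by
    simp_rw [hterm]
    rw [← Finset.mul_sum, ← Finset.sum_mul]
    have : ∑ j'' ∈ Finset.univ.erase j, u i j'' = 1 - u i j := by
      have := Finset.add_sum_erase Finset.univ (u i) (Finset.mem_univ j)
      rw [hrow i] at this
      exact eq_sub_of_add_eq' this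
    rw [this, sub_mul, one_mul, (hproj i j).2, sub_self, mul_zero]
  have hzero : (u i j * u i j') * star (u i j * u i j') = 0 := by
    have := (Finset.sum_eq_zero_iff_of_nonneg
      (fun j'' _ => mul_star_self_nonneg (u i j * u i j''))).mp hsum
    exact this j' (Finset.mem_erase.mpr ⟨hne.symm, Finset.mem_univ j'⟩)
  exact (CStarRing.mul_star_self_eq_zero_iff _).mp hzero

/-- The unrestricted sum of ordered products equals 1. -/
lemma magic_full_sum {A : Type*} [Ring A] {N : ℕ} (u : Fin N → Fin N → A)
    (hcol : ∀ j, ∑ i, u i j = 1) :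
    ∀ (k : ℕ) (j : Fin k → Fin N),
      ∑ i : Fin k → Fin N, (List.ofFn (fun s : Fin k => u (i s) (j s))).prod = 1 := by
  intro k
  induction k with
  | zero => intro j; simp
  | succ m ih =>
    intro j
    rw [← (Fin.consEquiv (fun _ : Fin (m + 1) => Fin N)).sum_comp]
    have : ∀ p : Fin N × (Fin m → Fin N),
        (List.ofFn (fun s : Fin (m + 1) =>
          u ((Fin.consEquiv (fun _ => Fin N)) p s) (j s))).prod
        = u p.1 (j 0) * (List.ofFn (fun s : Fin m => u (p.2 s) (j s.succ))).prod := by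
      intro p
      rw [List.ofFn_succ, List.prod_cons]
      simp [Fin.consEquiv]
    simp_rw [this]
    rw [Fintype.sum_prod_type]
    simp_rw [← Finset.mul_sum]
    rw [← Finset.sum_mul, ih (fun s => j s.succ), mul_one, hcol (j 0)]

/-- for an `N×N` magic matrix `u` over a unital C*-algebra and a tuple `j` with
consecutive entries distinct, the sum over all tuples `i` with consecutive entries distinct of
the ordered products `u_{i₁j₁} u_{i₂j₂} ⋯ u_{i_k j_k}` equals `1`. -/
theorem magic_sum_over_consecutive_distinct {A : Type*} [NormedRing A] [StarRing A]
    [CStarRing A] [NormedAlgebra ℂ A] [StarModule ℂ A] [CompleteSpace A]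
    (N k : ℕ) (hk : 1 ≤ k) (u : Fin N → Fin N → A)
    (hproj : ∀ i j, IsSelfAdjoint (u i j) ∧ IsIdempotentElem (u i j))
    (hrow : ∀ i, ∑ j, u i j = 1) (hcol : ∀ j, ∑ i, u i j = 1)
    (j : Fin k → Fin N) (hj : ∀ s t : Fin k, (s : ℕ) + 1 = (t : ℕ) → j s ≠ j t) :
    ∑ i ∈ Finset.univ.filter
        (fun i : Fin k → Fin N => ∀ s t : Fin k, (s : ℕ) + 1 = (t : ℕ) → i s ≠ i t),
      (List.ofFn (fun s : Fin k => u (i s) (j s))).prod = 1 := by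
  rw [Finset.sum_filter_of_ne, magic_full_sum u hcol k j]
  intro i _ hne s t hst
  intro heq
  apply hne
  refine prod_ofFn_eq_zero_of_adjacent k (fun s : Fin k => u (i s) (j s)) s
    (by omega) ?_
  have h1 : (⟨(s : ℕ), by omega⟩ : Fin k) = s := by simp [Fin.ext_iff]
  have h2 : (⟨(s : ℕ) + 1, by omega⟩ : Fin k) = t := by simp [Fin.ext_iff, hst]
  show u (i ⟨(s:ℕ), _⟩) (j ⟨(s:ℕ), _⟩) * u (i ⟨(s:ℕ)+1, _⟩) (j ⟨(s:ℕ)+1, _⟩) = 0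
  rw [h1, h2, heq]
  exact magic_row_orth u hproj hrow (i t) (j s) (j t) (hj s t hst)
end

section
/- Let N ≥ 2, K ≥ 1, and let P = (P_{ij}) be an N×N magic matrix over M_K(ℂ) whose entries pairwise commute, such that every entry P_{ij} has the same rank R, and such that Tr(P_{ij} P_{kl}) = K/(N(N−1)) for all indices with i ≠ k and j ≠ l, where Tr denotes the unnormalized trace on M_K(ℂ). Then N − 1 divides R. -/
/-! Commuting projections multiply to a projection, and the trace of a projection is its rank.
So `Tr(P_aa P_bb) = K / (N(N-1))` is a natural number for `a ≠ b`, while taking the trace of a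
row sum gives `K = N R`; hence `R = (N - 1) · rank(P_aa P_bb)`. -/

theorem Matrix.trace_eq_rank_of_isIdempotentElem {n 𝕜 : Type*} [Fintype n] [DecidableEq n]
    [Field 𝕜] {A : Matrix n n 𝕜} (hA : IsIdempotentElem A) : A.trace = A.rank := by
  have hlin : IsIdempotentElem (Matrix.toLin' A) := hA.map Matrix.toLinAlgEquiv'
  rw [Matrix.rank, ← Matrix.toLin'_apply',
    ← LinearMap.IsProj.trace (LinearMap.IsIdempotentElem.isProj_range _ hlin),
    Matrix.trace_toLin'_eq]

theorem Matrix.card_eq_sum_rank_of_sum_eq_one {ι n 𝕜 : Type*} [Fintype ι] [Fintype n]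
    [DecidableEq n] [Field 𝕜] [CharZero 𝕜] {P : ι → Matrix n n 𝕜}
    (hP : ∀ i, IsIdempotentElem (P i)) (hsum : ∑ i, P i = 1) :
    Fintype.card n = ∑ i, (P i).rank := by
  have := congrArg Matrix.trace hsum
  rw [Matrix.trace_sum, Matrix.trace_one] at this
  simp only [Matrix.trace_eq_rank_of_isIdempotentElem (hP _)] at this
  exact_mod_cast this.symm

theorem doubly_flat_classical_divisibility_general (N K R : ℕ) (hN : 2 ≤ N)
    (P : Fin N → Fin N → Matrix (Fin K) (Fin K) ℂ)
    (hproj : ∀ i j, IsSelfAdjoint (P i j) ∧ IsIdempotentElem (P i j))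
    (hrow : ∀ i, ∑ j, P i j = 1)
    (hcomm : ∀ i j k l, Commute (P i j) (P k l))
    (hrank : ∀ i j, (P i j).rank = R)
    (hflat : ∀ i j k l, i ≠ k → j ≠ l →
      Matrix.trace (P i j * P k l) = (K : ℂ) / ((N : ℂ) * ((N : ℂ) - 1))) :
    (N - 1) ∣ R := by
  obtain ⟨a, b, hab⟩ := (Fin.nontrivial_iff_two_le.mpr hN).exists_pair_ne
  have hK : K = N * R := by
    simpa [hrank] using Matrix.card_eq_sum_rank_of_sum_eq_one (fun j => (hproj a j).2) (hrow a)
  set Q := P a a * P b b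
  have hQ : IsIdempotentElem Q := (hproj a a).2.mul_of_commute (hcomm a a b b) (hproj b b).2
  have htr := hflat a a b b hab hab
  have hKc : (K : ℂ) = N * R := by exact_mod_cast hK
  rw [Matrix.trace_eq_rank_of_isIdempotentElem hQ, hKc] at htr
  have hN0 : (N : ℂ) ≠ 0 := Nat.cast_ne_zero.mpr (by omega)
  have hN1 : (N : ℂ) - 1 ≠ 0 := by
    rw [sub_ne_zero]; exact_mod_cast (by omega : N ≠ 1)
  refine ⟨Q.rank, ?_⟩
  rw [mul_comm, ← Nat.cast_inj (R := ℂ), Nat.cast_mul, Nat.cast_sub (by omega), Nat.cast_one, htr]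
  field_simp

/-- for an `N×N` magic matrix `P` over `M_K(ℂ)` with pairwise commuting entries,
all of the same rank `R`, satisfying the doubly flat condition
`Tr(P_{ij} P_{kl}) = K/(N(N−1))` for all `i ≠ k`, `j ≠ l`, one has `(N−1) ∣ R`. -/
theorem doubly_flat_classical_divisibility (N K R : ℕ) (hN : 2 ≤ N) (hK : 1 ≤ K)
    (P : Fin N → Fin N → Matrix (Fin K) (Fin K) ℂ)
    (hproj : ∀ i j, IsSelfAdjoint (P i j) ∧ IsIdempotentElem (P i j))
    (hrow : ∀ i, ∑ j, P i j = 1) (hcol : ∀ j, ∑ i, P i j = 1)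
    (hcomm : ∀ i j k l, Commute (P i j) (P k l))
    (hrank : ∀ i j, (P i j).rank = R)
    (hflat : ∀ i j k l, i ≠ k → j ≠ l →
      Matrix.trace (P i j * P k l) = (K : ℂ) / ((N : ℂ) * ((N : ℂ) - 1))) :
    (N - 1) ∣ R :=
  doubly_flat_classical_divisibility_general N K R hN P hproj hrow hcomm hrank hflat
end

section
/- Let (q_σ)_{σ ∈ S_3} be a family of projections in M_6(ℂ), indexed by the symmetric group S_3, with Σ_σ q_σ = 1, and define P_{ij} = Σ_{σ: σ(j)=i} q_σ for i, j ∈ {1,2,3}. Assume that every P_{ij} has rank 2 and that Tr(P_{ij} P_{kl}) = 1 for all indices with i ≠ k and j ≠ l. Then every q_σ has rank 1. -/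
/-!
Projections summing to `1` are mutually orthogonal, since `q_τ (1 - q_τ) q_τ = 0` is a sum of
positive terms `(q_σ q_τ)ᴴ (q_σ q_τ)`. Hence `P_{ij} P_{kl}` is the sum of the `q_σ` with
`σ j = i` and `σ l = k`. A permutation of `{1,2,3}` is determined by two of its values, so
`q_σ = P_{σ(1),1} P_{σ(2),2}`, and flatness gives `Tr q_σ = 1`; for a projection this is the rank.
-/

open Matrix Finset
open scoped ComplexOrder

theorem Equiv.Perm.ext_of_forall_ne {α : Type*} {σ τ : Equiv.Perm α} (a : α)
    (h : ∀ x, x ≠ a → σ x = τ x) : σ = τ := by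
  ext x
  by_contra hne
  have hx : x = a := by_contra fun hx => hne (h x hx)
  subst hx
  have hy : σ.symm (τ x) ≠ x := fun hy => hne (by rw [← hy, Equiv.apply_symm_apply, hy])
  exact hy (τ.injective (by rw [← h _ hy, Equiv.apply_symm_apply]))

theorem OrthogonalIdempotents.sum_mul_sum {R I : Type*} [Semiring R] [DecidableEq I]
    {e : I → R} (he : OrthogonalIdempotents e) (s t : Finset I) :
    (∑ i ∈ s, e i) * (∑ j ∈ t, e j) = ∑ i ∈ s ∩ t, e i := by
  rw [sum_mul, ← sum_ite_mem]
  refine sum_congr rfl fun i _ => ?_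
  split_ifs with h
  · exact he.mul_sum_of_mem h
  · exact he.mul_sum_of_notMem h

theorem Matrix.completeOrthogonalIdempotents_of_sum_eq_one {n ι R : Type*} [Fintype n]
    [DecidableEq n] [Fintype ι] [DecidableEq ι] [Ring R] [PartialOrder R] [StarRing R]
    [StarOrderedRing R] [NoZeroDivisors R] {q : ι → Matrix n n R}
    (hq : ∀ i, IsStarProjection (q i)) (hsum : ∑ i, q i = 1) :
    CompleteOrthogonalIdempotents q := by
  refine CompleteOrthogonalIdempotents.iff_ortho_complete.2 ⟨fun i j hij => ?_, hsum⟩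
  have hsa : ∀ k, (q k)ᴴ = q k := fun k => (hq k).isSelfAdjoint
  have hsq : ∀ k, q j * q k * q j = (q k * q j)ᴴ * (q k * q j) := fun k => by
    rw [conjTranspose_mul, hsa, hsa, ← mul_assoc, mul_assoc (q j) (q k) (q k),
      (hq k).isIdempotentElem.eq]
  have htrace : ∑ k ∈ univ.erase j, ((q k * q j)ᴴ * (q k * q j)).trace = 0 := by
    simp_rw [← hsq, ← trace_sum, ← sum_mul, ← mul_sum, sum_erase_eq_sub (mem_univ j), hsum,
      (hq j).mul_one_sub_self, zero_mul, trace_zero]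
  have hterm : ((q i * q j)ᴴ * (q i * q j)).trace = 0 :=
    (sum_eq_zero_iff_of_nonneg fun k _ =>
      (posSemidef_conjTranspose_mul_self (q k * q j)).trace_nonneg).1 htrace i (by simpa using hij)
  exact trace_conjTranspose_mul_self_eq_zero_iff.1 hterm

theorem Matrix.rank_eq_trace_of_isIdempotentElem {n K : Type*} [Fintype n] [DecidableEq n]
    [Field K] [CharZero K] {A : Matrix n n K} (hA : IsIdempotentElem A) :
    (A.rank : K) = A.trace := by
  have hlin : IsIdempotentElem A.mulVecLin := by
    rw [IsIdempotentElem, Module.End.mul_eq_comp, ← mulVecLin_mul, hA.eq]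
  rw [← trace_toLin'_eq, toLin'_apply', (LinearMap.IsIdempotentElem.isProj_range _ hlin).trace]
  rfl

theorem minimal_doubly_flat_S3_model_general (q : Equiv.Perm (Fin 3) → Matrix (Fin 6) (Fin 6) ℂ)
    (hproj : ∀ σ, IsSelfAdjoint (q σ) ∧ IsIdempotentElem (q σ))
    (hsum : ∑ σ, q σ = 1)
    (P : Fin 3 → Fin 3 → Matrix (Fin 6) (Fin 6) ℂ)
    (hP : ∀ i j, P i j = ∑ σ ∈ Finset.univ.filter (fun σ : Equiv.Perm (Fin 3) => σ j = i), q σ)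
    (hflat : ∀ i j k l, i ≠ k → j ≠ l → Matrix.trace (P i j * P k l) = 1) :
    ∀ σ, (q σ).rank = 1 := by
  have hq : CompleteOrthogonalIdempotents q :=
    completeOrthogonalIdempotents_of_sum_eq_one (fun σ => ⟨(hproj σ).2, (hproj σ).1⟩) hsum
  intro σ
  have hdetermined : univ.filter (fun τ : Equiv.Perm (Fin 3) => τ 0 = σ 0) ∩
      univ.filter (fun τ => τ 1 = σ 1) = {σ} := by
    ext τ
    simp only [mem_inter, mem_filter, mem_univ, true_and, mem_singleton]
    refine ⟨fun ⟨h0, h1⟩ => Equiv.Perm.ext_of_forall_ne 2 fun x hx => ?_, by rintro rfl; simp⟩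
    fin_cases x <;> simp_all
  have hfactor : P (σ 0) 0 * P (σ 1) 1 = q σ := by
    rw [hP, hP, hq.sum_mul_sum, hdetermined, sum_singleton]
  have htrace : (q σ).trace = 1 :=
    hfactor ▸ hflat _ _ _ _ (σ.injective.ne (by decide)) (by decide)
  exact_mod_cast (rank_eq_trace_of_isIdempotentElem (hq.idem σ)).trans htrace

/-- if `(q_σ)_{σ ∈ S_3}` are projections in `M_6(ℂ)` summing to `1`, and the
associated magic matrix `P_{ij} = Σ_{σ(j)=i} q_σ` has all entries of rank `2` and satisfies
`Tr(P_{ij} P_{kl}) = 1` for `i ≠ k`, `j ≠ l`, then every `q_σ` has rank `1`. -/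
theorem minimal_doubly_flat_S3_model (q : Equiv.Perm (Fin 3) → Matrix (Fin 6) (Fin 6) ℂ)
    (hproj : ∀ σ, IsSelfAdjoint (q σ) ∧ IsIdempotentElem (q σ))
    (hsum : ∑ σ, q σ = 1)
    (P : Fin 3 → Fin 3 → Matrix (Fin 6) (Fin 6) ℂ)
    (hP : ∀ i j, P i j = ∑ σ ∈ Finset.univ.filter (fun σ : Equiv.Perm (Fin 3) => σ j = i), q σ)
    (hrank : ∀ i j, (P i j).rank = 2)
    (hflat : ∀ i j k l, i ≠ k → j ≠ l → Matrix.trace (P i j * P k l) = 1) :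
    ∀ σ, (q σ).rank = 1 :=
  minimal_doubly_flat_S3_model_general q hproj hsum P hP hflat
end
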